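/- Assume α = 0. For every p ≥ 1: (R^p·ω)(e_1, e_2, …, e_1, e_2, e_2, e_3, e_1, e_2), with p−1 leading pairs (e_1, e_2) followed by e_2, e_3, e_1, e_2, equals (−1)^{p+1} ε^p (p−1)! ω(e_2, e_3). -/

import Mathlib

/-!
With `α = 0` we have `S e₁ = e₂`, `S e₂ = e₃`, `S e₃ = 0`, and `R(e₁,e₂)` acts diagonally on
`e₁, e₂, e₃` with eigenvalues `0, ε, -ε`. Since `R^k·ω` is homogeneous in each slot, applying
`R(e₁,e₂)` to a form evaluated on eigenvectors just multiplies by minus the sum of the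
eigenvalues; on `(e₁,e₂)^{p-1}, e₂, e₃, e₁, e₂` that sum is `pε`. Hence the value for `p + 1` is
`-pε` times the value for `p`, and for `p = 1` one computes directly
`(R·ω)(e₂,e₃,e₁,e₂) = -ω(εe₃, e₂) = εω(e₂,e₃)`.
-/

noncomputable section

/-- Gauss-equation curvature `R(X,Y)Z = h(Y,Z)·S(X) − h(X,Z)·S(Y)`. -/
def RR {V : Type*} [AddCommGroup V] [Module ℝ V]
    (h : V →ₗ[ℝ] V →ₗ[ℝ] ℝ) (S : V →ₗ[ℝ] V) (X Y Z : V) : V :=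
  h Y Z • S X - h X Z • S Y

/-- One application of the curvature action on an `m`-linear form (encoded as a
function on lists of vectors): `(R·T)(X,Y,Z₁,…,Zₘ) = −∑ᵢ T(Z₁,…,R(X,Y)Zᵢ,…,Zₘ)`;
the two newest (leftmost) arguments are consumed. -/
def RAct {V : Type*} [AddCommGroup V] [Module ℝ V]
    (h : V →ₗ[ℝ] V →ₗ[ℝ] ℝ) (S : V →ₗ[ℝ] V) (T : List V → ℝ) : List V → ℝ
  | X :: Y :: Zs =>
      -∑ i ∈ Finset.range Zs.length, T (Zs.set i (RR h S X Y (Zs.getD i 0)))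
  | _ => 0

/-- `R^p · ω`, as a function on lists of vectors (of length `2p+2`):
`R⁰·ω = ω` and `R^p·ω = R·(R^{p−1}·ω)`. -/
def Rpow {V : Type*} [AddCommGroup V] [Module ℝ V]
    (h : V →ₗ[ℝ] V →ₗ[ℝ] ℝ) (S : V →ₗ[ℝ] V) (ω : V →ₗ[ℝ] V →ₗ[ℝ] ℝ) (p : ℕ) :
    List V → ℝ :=
  (RAct h S)^[p] (fun l => ω (l.getD 0 0) (l.getD 1 0))

/-- The list `X, Y, X, Y, …` with `p` pairs `(X, Y)`. -/
def pairList {V : Type*} (X Y : V) : ℕ → List V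
  | 0 => []
  | p + 1 => X :: Y :: pairList X Y p

/-- The list `f 1, y, f 2, y, …, f p, y`. -/
def interleave {V : Type*} (f : ℕ → V) (y : V) : ℕ → List V
  | 0 => []
  | p + 1 => interleave f y p ++ [f (p + 1), y]

section PairList

variable {α : Type*}

theorem length_pairList (x y : α) (q : ℕ) : (pairList x y q).length = 2 * q := by
  induction q with
  | zero => rfl
  | succ q ih => simp only [pairList, List.length_cons, ih]; ring

theorem sum_pairList [AddCommMonoid α] (a b : α) (q : ℕ) :
    (pairList a b q).sum = q • (a + b) := by
  induction q with
  | zero => simp [pairList]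
  | succ q ih => simp only [pairList, List.sum_cons, ih, succ_nsmul]; abel

theorem forall₂_pairList {β : Type*} {R : α → β → Prop} {x y : α} {a b : β}
    (hx : R x a) (hy : R y b) (q : ℕ) : List.Forall₂ R (pairList x y q) (pairList a b q) := by
  induction q with
  | zero => exact .nil
  | succ q ih => exact .cons hx (.cons hy ih)

end PairList

section Curvature

variable {V : Type*} [AddCommGroup V] [Module ℝ V]

def SlotHomogeneous (m : ℕ) (T : List V → ℝ) : Prop :=
  ∀ l : List V, l.length = m → ∀ i < m, ∀ (c : ℝ) (v : V),
    T (l.set i (c • v)) = c * T (l.set i v)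

variable (h : V →ₗ[ℝ] V →ₗ[ℝ] ℝ) (S : V →ₗ[ℝ] V) (ω : V →ₗ[ℝ] V →ₗ[ℝ] ℝ)

theorem RR_smul_left (c : ℝ) (X Y Z : V) : RR h S (c • X) Y Z = c • RR h S X Y Z := by
  simp only [RR, map_smul, LinearMap.smul_apply, smul_eq_mul]
  module

theorem RR_smul_mid (c : ℝ) (X Y Z : V) : RR h S X (c • Y) Z = c • RR h S X Y Z := by
  simp only [RR, map_smul, LinearMap.smul_apply, smul_eq_mul]
  module

theorem RR_smul_right (c : ℝ) (X Y Z : V) : RR h S X Y (c • Z) = c • RR h S X Y Z := by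
  simp only [RR, map_smul, smul_eq_mul]
  module

theorem RAct_cons (T : List V → ℝ) (X Y : V) (Zs : List V) :
    RAct h S T (X :: Y :: Zs) =
      -∑ i ∈ Finset.range Zs.length, T (Zs.set i (RR h S X Y (Zs.getD i 0))) :=
  rfl

theorem Rpow_zero_apply (l : List V) : Rpow h S ω 0 l = ω (l.getD 0 0) (l.getD 1 0) :=
  rfl

theorem Rpow_succ (q : ℕ) : Rpow h S ω (q + 1) = RAct h S (Rpow h S ω q) :=
  Function.iterate_succ_apply' (RAct h S) q _

theorem slotHomogeneous_Rpow_zero : SlotHomogeneous 2 (Rpow h S ω 0) := by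
  rintro (_ | ⟨x, _ | ⟨y, _ | ⟨z, t⟩⟩⟩) hl i hi c v <;> simp at hl
  interval_cases i <;> simp [Rpow_zero_apply]

theorem slotHomogeneous_RAct {m : ℕ} {T : List V → ℝ} (hT : SlotHomogeneous m T) :
    SlotHomogeneous (m + 2) (RAct h S T) := by
  rintro (_ | ⟨x, _ | ⟨y, zs⟩⟩) hl i hi c v
  · simp at hl
  · simp at hl
  have hzs : zs.length = m := by simpa using hl
  rcases i with _ | _ | i <;>
    simp only [List.set_cons_zero, List.set_cons_succ, RAct_cons, List.length_set, mul_neg,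
      Finset.mul_sum, neg_inj]
  · refine Finset.sum_congr rfl fun j hj => ?_
    rw [RR_smul_left]
    exact hT zs hzs j (by simpa [hzs] using hj) _ _
  · refine Finset.sum_congr rfl fun j hj => ?_
    rw [RR_smul_mid]
    exact hT zs hzs j (by simpa [hzs] using hj) _ _
  · refine Finset.sum_congr rfl fun j hj => ?_
    have hj : j < m := by simpa [hzs] using hj
    obtain rfl | hij := eq_or_ne i j
    · have hget (w : V) : (zs.set i w).getD i 0 = w := by simp [List.getD, hzs, hj]
      rw [List.set_set, List.set_set, hget, hget, RR_smul_right]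
      exact hT zs hzs i hj _ _
    · have hget (w : V) : (zs.set i w).getD j 0 = zs.getD j 0 := by
        simp [List.getD, List.getElem?_set_ne hij]
      rw [hget, hget, List.set_comm _ _ hij, List.set_comm _ _ hij]
      exact hT _ (by simpa using hzs) i (by omega) _ _

theorem slotHomogeneous_Rpow (k : ℕ) : SlotHomogeneous (2 * k + 2) (Rpow h S ω k) := by
  induction k with
  | zero => exact slotHomogeneous_Rpow_zero h S ω
  | succ k ih => rw [Rpow_succ]; exact slotHomogeneous_RAct h S ih

theorem RAct_cons_of_eigen {m : ℕ} {T : List V → ℝ} (hT : SlotHomogeneous m T)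
    {X Y : V} {l : List V} {cs : List ℝ}
    (hl : List.Forall₂ (fun v c => RR h S X Y v = c • v) l cs) (hlen : l.length = m) :
    RAct h S T (X :: Y :: l) = -cs.sum * T l := by
  obtain ⟨hcs, heigen⟩ := List.forall₂_iff_get.mp hl
  have hsummand : ∀ i ∈ Finset.range l.length,
      T (l.set i (RR h S X Y (l.getD i 0))) = cs.getD i 0 * T l := by
    intro i hi
    have hi : i < l.length := Finset.mem_range.mp hi
    have hi' : i < cs.length := hcs ▸ hi
    have := heigen i hi hi'
    simp only [List.get_eq_getElem] at this
    rw [List.getD_eq_getElem _ _ hi, List.getD_eq_getElem _ _ hi', this,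
      hT l hlen i (hlen ▸ hi), List.set_getElem_self]
  rw [RAct_cons, Finset.sum_congr rfl hsummand, ← Finset.sum_mul, hcs,
    ← Fin.sum_univ_eq_sum_range, neg_mul]
  simp only [List.getD_eq_getElem _ _ (Fin.is_lt _), Fin.sum_univ_getElem]

theorem Rpow_succ_cons_of_eigen {k : ℕ} {X Y : V} {l : List V} {cs : List ℝ}
    (hl : List.Forall₂ (fun v c => RR h S X Y v = c • v) l cs) (hlen : l.length = 2 * k + 2) :
    Rpow h S ω (k + 1) (X :: Y :: l) = -cs.sum * Rpow h S ω k l := by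
  rw [Rpow_succ]
  exact RAct_cons_of_eigen h S (slotHomogeneous_Rpow h S ω k) hl hlen

end Curvature

theorem stmt14_general
    {V : Type*} [AddCommGroup V] [Module ℝ V]
    (n : ℕ) (hn : 2 ≤ n) (e : ℕ → V)
    (h ω : V →ₗ[ℝ] V →ₗ[ℝ] ℝ)
    (halt : ∀ X, ω X X = 0)
    (S : V →ₗ[ℝ] V)
    (α ε : ℝ)
    (hS1 : S (e 1) = α • e 1 + e 2)
    (hS2 : S (e 2) = α • e 2 + e 3)
    (hS3 : S (e 3) = α • e 3)
    (hh13 : h (e 1) (e 3) = ε) (hh31 : h (e 3) (e 1) = ε) (hh22 : h (e 2) (e 2) = ε)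
    (hh0 : ∀ i j, 1 ≤ i → i ≤ 2 * n → 1 ≤ j → j ≤ 2 * n → min i j ≤ 3 →
      ¬((i = 1 ∧ j = 3) ∨ (i = 3 ∧ j = 1) ∨ (i = 2 ∧ j = 2)) → h (e i) (e j) = 0)
    (hα : α = 0)
    (p : ℕ) (hp : 1 ≤ p) :
    Rpow h S ω p (pairList (e 1) (e 2) (p - 1) ++ [e 2, e 3, e 1, e 2]) =
      (-1) ^ (p + 1) * ε ^ p * (Nat.factorial (p - 1) : ℝ) * ω (e 2) (e 3) := by
  subst hα
  simp only [zero_smul, zero_add] at hS1 hS2 hS3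
  have h11 : h (e 1) (e 1) = 0 := by apply hh0 <;> omega
  have h12 : h (e 1) (e 2) = 0 := by apply hh0 <;> omega
  have h21 : h (e 2) (e 1) = 0 := by apply hh0 <;> omega
  have h23 : h (e 2) (e 3) = 0 := by apply hh0 <;> omega
  have h32 : h (e 3) (e 2) = 0 := by apply hh0 <;> omega
  have hω32 : ω (e 3) (e 2) = -ω (e 2) (e 3) := (LinearMap.IsAlt.neg (B := ω) halt _ _).symm
  have heigen : ∀ q, List.Forall₂ (fun v c => RR h S (e 1) (e 2) v = c • v)
      (pairList (e 1) (e 2) q ++ [e 2, e 3, e 1, e 2]) (pairList 0 ε q ++ [ε, -ε, 0, ε]) := by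
    intro q
    refine List.rel_append (forall₂_pairList ?_ ?_ q) ?_ <;>
      simp [RR, h11, h12, h21, h23, hh13, hh22, hS1, hS2]
  obtain ⟨q, rfl⟩ : ∃ q, p = q + 1 := ⟨p - 1, by omega⟩
  clear hp
  simp only [Nat.add_sub_cancel]
  induction q with
  | zero =>
    rw [pairList, List.nil_append, Rpow_succ, RAct_cons]
    simp [Finset.sum_range_succ, Rpow_zero_apply, RR, hh31, h32, hS2, hS3, hω32]
  | succ q ih =>
    rw [pairList, List.cons_append, List.cons_append, Rpow_succ_cons_of_eigen h S ω (heigen q)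
      (by simp [length_pairList]; ring), ih]
    simp [sum_pairList, Nat.factorial_succ]
    ring

theorem stmt14
    {V : Type*} [AddCommGroup V] [Module ℝ V]
    (n : ℕ) (hn : 2 ≤ n) (e : ℕ → V)
    (hbasis : ∃ b : Module.Basis (Fin (2 * n)) ℝ V, ∀ i : Fin (2 * n), b i = e (i.1 + 1))
    (h ω : V →ₗ[ℝ] V →ₗ[ℝ] ℝ)
    (hsymm : ∀ X Y, h X Y = h Y X)
    (halt : ∀ X, ω X X = 0)
    (S : V →ₗ[ℝ] V)
    (α ε : ℝ) (hε : ε = 1 ∨ ε = -1)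
    (hS1 : S (e 1) = α • e 1 + e 2)
    (hS2 : S (e 2) = α • e 2 + e 3)
    (hS3 : S (e 3) = α • e 3)
    (hh13 : h (e 1) (e 3) = ε) (hh31 : h (e 3) (e 1) = ε) (hh22 : h (e 2) (e 2) = ε)
    (hh0 : ∀ i j, 1 ≤ i → i ≤ 2 * n → 1 ≤ j → j ≤ 2 * n → min i j ≤ 3 →
      ¬((i = 1 ∧ j = 3) ∨ (i = 3 ∧ j = 1) ∨ (i = 2 ∧ j = 2)) → h (e i) (e j) = 0)
    (hα : α = 0)
    (p : ℕ) (hp : 1 ≤ p) :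
    Rpow h S ω p (pairList (e 1) (e 2) (p - 1) ++ [e 2, e 3, e 1, e 2]) =
      (-1) ^ (p + 1) * ε ^ p * (Nat.factorial (p - 1) : ℝ) * ω (e 2) (e 3) :=
  stmt14_general n hn e h ω halt S α ε hS1 hS2 hS3 hh13 hh31 hh22 hh0 hα p hp
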